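/- arXiv:2410.10002 — 4 statements merged into one kernel-verified Lean document; each statement's English description precedes it below -/
import Mathlib

section
/- (Iterated-logarithm sum bound used in the collision analysis of Claim 2.5 and the proof of Theorem 2.1.) Let x > 1 be a real number and j ≥ 1 an integer such that the iterates L₁(x), L₂(x), …, L_{j+1}(x) are all defined (each successive iterate is positive) and L_{j+1}(x) ≥ 1. Then Σ_{η=1}^{j} 2^{−2·L_{η+1}(x)} ≤ 2 · 2^{−2·L_{j+1}(x)}. -/
/-- `iterLog k x` is the `k`-fold iterated base-2 logarithm of `x`:
`iterLog 0 x = x` and `iterLog (k+1) x = log₂ (iterLog k x)`,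
so that `L_k(x) = iterLog k x` for `k ≥ 1`. -/
noncomputable def iterLog : ℕ → ℝ → ℝ
  | 0, x => x
  | k + 1, x => Real.logb 2 (iterLog k x)

lemma auxA (t : ℝ) (ht : 1 ≤ t) : t + 1 ≤ (2:ℝ) ^ t := by
  have h1 : (2:ℝ) ^ t = 2 * (2:ℝ) ^ (t - 1) := by
    rw [show t = 1 + (t - 1) by ring, Real.rpow_add two_pos, Real.rpow_one]
    ring_nf
  have h2 : (2:ℝ) ^ (t - 1) = Real.exp ((t - 1) * Real.log 2) := by
    rw [Real.rpow_def_of_pos two_pos]; ring_nf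
  have h3 : (t - 1) * Real.log 2 + 1 ≤ Real.exp ((t - 1) * Real.log 2) :=
    Real.add_one_le_exp _
  have hlog : (0.5:ℝ) ≤ Real.log 2 := by
    have := Real.log_two_gt_d9; linarith
  nlinarith [h3, Real.exp_pos ((t-1) * Real.log 2)]

lemma auxKey (t : ℝ) (ht : 1 ≤ t) :
    2 * (2:ℝ) ^ (-(2 * (2:ℝ) ^ t)) ≤ (2:ℝ) ^ (-(2 * t)) := by
  have hA := auxA t ht
  calc 2 * (2:ℝ) ^ (-(2 * (2:ℝ) ^ t)) = (2:ℝ) ^ (1 + -(2 * (2:ℝ)^t)) := by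
        rw [Real.rpow_add two_pos, Real.rpow_one]
    _ ≤ (2:ℝ) ^ (-(2 * t)) := by
        apply Real.rpow_le_rpow_of_exponent_le one_le_two
        linarith

lemma iterLog_succ_eq (x : ℝ) (k : ℕ) (h : 0 < iterLog k x) :
    iterLog k x = (2:ℝ) ^ iterLog (k+1) x := by
  show iterLog k x = (2:ℝ) ^ Real.logb 2 (iterLog k x)
  rw [Real.rpow_logb two_pos (by norm_num) h]

/-- **Iterated-logarithm sum bound used in the collision analysis of Claim 2.5 and the
proof of Theorem 2.1.**  Let `x > 1` be a real number and `j ≥ 1` an integer such that the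
iterates `L₁(x), …, L_{j+1}(x)` are all defined (each successive iterate is positive) and
`L_{j+1}(x) ≥ 1`.  Then `Σ_{η=1}^{j} 2^{−2·L_{η+1}(x)} ≤ 2 · 2^{−2·L_{j+1}(x)}`. -/
theorem iterated_log_sum_bound (x : ℝ) (hx : 1 < x) (j : ℕ) (hj : 1 ≤ j)
    (hdef : ∀ k, 1 ≤ k → k ≤ j + 1 → 0 < iterLog k x)
    (hlast : 1 ≤ iterLog (j + 1) x) :
    ∑ η ∈ Finset.Icc 1 j, (2 : ℝ) ^ (-(2 * iterLog (η + 1) x)) ≤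
      2 * (2 : ℝ) ^ (-(2 * iterLog (j + 1) x)) := by
  induction j with
  | zero => omega
  | succ n ih =>
    rcases Nat.eq_or_lt_of_le hj with h1 | h1
    · -- n + 1 = 1, so n = 0
      have hn : n = 0 := by omega
      subst hn
      simp only [Finset.Icc_self, Finset.sum_singleton]
      have : (0:ℝ) < (2:ℝ) ^ (-(2 * iterLog (1 + 1) x)) := Real.rpow_pos_of_pos two_pos _
      norm_num
      linarith
    · have hn : 1 ≤ n := by omega
      have hpos : 0 < iterLog (n + 1 + 1) x := hdef (n+2) (by omega) le_rfl
      have heq : iterLog (n + 1) x = (2:ℝ) ^ iterLog (n + 2) x :=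
        iterLog_succ_eq x (n+1) (hdef (n+1) (by omega) (by omega))
      have hlast' : 1 ≤ iterLog (n + 1) x := by
        rw [heq]
        calc (1:ℝ) ≤ iterLog (n+2) x + 1 := by linarith
          _ ≤ (2:ℝ) ^ iterLog (n+2) x := auxA _ hlast
      have IH := ih hn (fun k hk hk' => hdef k hk (by omega)) hlast'
      rw [Finset.sum_Icc_succ_top (by omega : 1 ≤ n + 1)]
      have key : 2 * (2:ℝ) ^ (-(2 * iterLog (n+1) x)) ≤ (2:ℝ) ^ (-(2 * iterLog (n+2) x)) := by
        rw [heq]; exact auxKey _ hlast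
      have : (2:ℝ) ^ (-(2 * iterLog (n+1+1) x)) = (2:ℝ) ^ (-(2 * iterLog (n+2) x)) := rfl
      linarith [IH]
end

section
/- (Claim 2.6, existential part.) There is an absolute constant c₀ > 0 such that for all positive integers B, t, t' with t' ≥ t ≥ 20 and 2^{B/2^t} ≥ c₀·B·(t' + log₂ B + 1), there exists a family H of functions from a set of size B·2^{t'} to a set of size B·2^t with |H| ≤ 2^{⌈33·B/2^t⌉}, such that for every subset S of the domain with |S| ≤ 4B there exists h ∈ H that is injective on S. -/
/-!
Probabilistic method. A uniformly random map from a set of size `n = B·2^t'` to one of size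
`m = B·2^t` is injective on a fixed set of size `s ≤ 4B` with probability
`m(m-1)⋯(m-s+1)/m^s ≥ (1 - s/m)^s ≥ 2^{-2s²/m} ≥ p := 2^{-32B/2^t}`. Hence `k = 2^{⌈33B/2^t⌉}`
independent maps all fail on a fixed `S` with probability at most `(1-p)^k ≤ e^{-pk}`, and
`pk ≥ 2^{B/2^t} ≥ 5B(t' + log₂ B + 1)`, so `e^{pk}` exceeds the number `(4B+1)·n^{4B} < (2n)^{5B}`
of candidate sets `S`. By the union bound some `k`-tuple of maps works for every `S`.
-/

open Finset Real

theorem exists_finset_card_le_forall_exists_of_card_lt_exp {X ι : Type*} [Finite X] [Nonempty X]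
    (𝒮 : Finset ι) (P : ι → X → Prop) (p : ℝ) (k : ℕ)
    (hP : ∀ S ∈ 𝒮, p * Nat.card X ≤ Nat.card {x // P S x})
    (h𝒮 : (#𝒮 : ℝ) < exp (p * k)) :
    ∃ H : Finset X, #H ≤ k ∧ ∀ S ∈ 𝒮, ∃ x ∈ H, P S x := by
  classical
  have := Fintype.ofFinite X
  suffices ∃ g : Fin k → X, ∀ S ∈ 𝒮, ∃ i, P S (g i) by
    obtain ⟨g, hg⟩ := this
    refine ⟨univ.image g, card_image_le.trans (card_fin k).le, fun S hS => ?_⟩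
    obtain ⟨i, hi⟩ := hg S hS
    exact ⟨g i, mem_image_of_mem g (mem_univ i), hi⟩
  by_contra! hmiss
  set n := Fintype.card X
  let miss (S : ι) : Finset (Fin k → X) := Fintype.piFinset fun _ => {x | ¬P S x}
  have hcover : (univ : Finset (Fin k → X)) ⊆ 𝒮.biUnion miss := fun g _ => by
    obtain ⟨S, hS, hg⟩ := hmiss g
    exact mem_biUnion.2 ⟨S, hS, Fintype.mem_piFinset.2 fun i => by simpa using hg i⟩
  have hmiss_card (S : ι) (hS : S ∈ 𝒮) : (#(miss S) : ℝ) ≤ exp (-(p * k)) * n ^ k := by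
    have hsplit : #{x | P S x} + #{x | ¬P S x} = n := card_filter_add_card_filter_not _
    have hgood : p * n ≤ #{x | P S x} := by
      simpa [Nat.card_eq_fintype_card, Fintype.card_subtype] using hP S hS
    have hbad : (#{x | ¬P S x} : ℝ) ≤ exp (-p) * n := calc
      (#{x | ¬P S x} : ℝ) ≤ (1 - p) * n := by
        have : (#{x | P S x} : ℝ) + #{x | ¬P S x} = n := by exact_mod_cast hsplit
        linarith
      _ ≤ exp (-p) * n := by
        gcongr
        exact one_sub_le_exp_neg p
    calc (#(miss S) : ℝ) = (#{x | ¬P S x} : ℝ) ^ k := by simp [miss]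
      _ ≤ (exp (-p) * n) ^ k := by gcongr
      _ = exp (-(p * k)) * n ^ k := by rw [mul_pow, ← exp_nat_mul]; ring_nf
  have : (n : ℝ) ^ k < n ^ k := calc
    (n : ℝ) ^ k = #(univ : Finset (Fin k → X)) := by simp [n]
    _ ≤ ∑ S ∈ 𝒮, (#(miss S) : ℝ) := by
      exact_mod_cast (card_le_card hcover).trans card_biUnion_le
    _ ≤ #𝒮 * (exp (-(p * k)) * n ^ k) := by
      simpa using sum_le_sum hmiss_card
    _ < exp (p * k) * (exp (-(p * k)) * n ^ k) := by gcongr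
    _ = n ^ k := by rw [← mul_assoc, ← exp_add]; simp
  exact this.false

theorem two_rpow_neg_two_mul_le_one_sub {x : ℝ} (h0 : 0 ≤ x) (h1 : x ≤ 1 / 2) :
    (2 : ℝ) ^ (-(2 * x)) ≤ 1 - x := calc
  (2 : ℝ) ^ (-(2 * x)) = exp ((1 - 2 * x) * 0 + 2 * x * -log 2) := by
    rw [rpow_def_of_pos two_pos]; ring_nf
  _ ≤ (1 - 2 * x) * exp 0 + 2 * x * exp (-log 2) :=
    convexOn_exp.2 (Set.mem_univ _) (Set.mem_univ _) (by linarith) (by linarith) (by ring)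
  _ = 1 - x := by rw [exp_zero, exp_neg, exp_log two_pos]; ring

theorem Set.natCard_injOn {α β : Type*} [Finite α] [Finite β] (s : Set α) :
    Nat.card {f : α → β // Set.InjOn f s} =
      (Nat.card β).descFactorial (Nat.card s) * Nat.card β ^ (Nat.card α - Nat.card s) := by
  classical
  have := Fintype.ofFinite α
  have := Fintype.ofFinite β
  let e : {f : α → β // Set.InjOn f s} ≃ (s ↪ β) × ({a // a ∉ s} → β) :=
    ((Equiv.piEquivPiSubtypeProd (· ∈ s) fun _ => β).subtypeEquiv
      fun _ => Set.injOn_iff_injective).trans <|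
    Equiv.prodSubtypeFstEquivSubtypeProd.trans <|
      (Equiv.subtypeInjectiveEquivEmbedding _ _).prodCongr (Equiv.refl _)
  rw [Nat.card_congr e, Nat.card_prod, Nat.card_fun, Nat.card_eq_fintype_card (α := s ↪ β),
    Fintype.card_embedding_eq, ← Nat.card_eq_fintype_card, ← Nat.card_eq_fintype_card]
  simp

theorem Set.two_rpow_mul_pow_le_natCard_injOn {α β : Type*} [Finite α] [Finite β] {s : Set α}
    (hs : 2 * Nat.card s ≤ Nat.card β) :
    (2 : ℝ) ^ (-(2 * (Nat.card s : ℝ) ^ 2 / Nat.card β)) * Nat.card β ^ Nat.card α ≤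
      Nat.card {f : α → β // Set.InjOn f s} := by
  set m := Nat.card β
  set r := Nat.card s
  set n := Nat.card α
  have hrn : r ≤ n := Finite.card_subtype_le _
  have hbase : (m : ℝ) * 2 ^ (-(2 * (r / m : ℝ))) ≤ (m - r : ℕ) := by
    rcases Nat.eq_zero_or_pos m with hm | hm
    · simp [hm]
    have hx : (r / m : ℝ) ≤ 1 / 2 := by
      rw [div_le_div_iff₀ (by positivity) two_pos]; exact_mod_cast (by omega : r * 2 ≤ 1 * m)
    calc (m : ℝ) * 2 ^ (-(2 * (r / m : ℝ))) ≤ m * (1 - r / m) := by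
          gcongr; exact two_rpow_neg_two_mul_le_one_sub (by positivity) hx
      _ = (m - r : ℕ) := by rw [Nat.cast_sub (by omega)]; field_simp
  have hdesc : (m - r) ^ r * m ^ (n - r) ≤ Nat.card {f : α → β // Set.InjOn f s} := by
    rw [Set.natCard_injOn]
    gcongr
    exact (Nat.pow_le_pow_left (by omega) r).trans (Nat.pow_sub_le_descFactorial m r)
  have hpow : (2 : ℝ) ^ (-(2 * (r : ℝ) ^ 2 / m)) = (2 ^ (-(2 * (r / m : ℝ)))) ^ r := by
    rw [← rpow_mul_natCast zero_le_two]; ring_nf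
  calc (2 : ℝ) ^ (-(2 * (r : ℝ) ^ 2 / m)) * m ^ n
      = (m * 2 ^ (-(2 * (r / m : ℝ)))) ^ r * m ^ (n - r) := by
        rw [hpow, mul_pow, ← Nat.add_sub_cancel' hrn, pow_add, Nat.add_sub_cancel_left]; ring
    _ ≤ ((m - r : ℕ) : ℝ) ^ r * m ^ (n - r) := by gcongr
    _ ≤ _ := by exact_mod_cast hdesc

theorem card_filter_card_le_le {α : Type*} [Fintype α] [Nonempty α] (r : ℕ) :
    #{S : Finset α | #S ≤ r} ≤ (r + 1) * Fintype.card α ^ r := by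
  classical
  calc #{S : Finset α | #S ≤ r} ≤ #((range (r + 1)).biUnion fun i => powersetCard i univ) :=
      card_le_card fun S hS =>
        mem_biUnion.2 ⟨#S, by simpa [Nat.lt_succ_iff] using hS, mem_powersetCard_univ.2 rfl⟩
    _ ≤ ∑ i ∈ range (r + 1), #(powersetCard i (univ : Finset α)) := card_biUnion_le
    _ ≤ ∑ _i ∈ range (r + 1), Fintype.card α ^ r := sum_le_sum fun i hi => by
      rw [card_powersetCard, card_univ]
      exact (Nat.choose_le_pow _ _).trans
        (Nat.pow_le_pow_right Fintype.card_pos (Nat.lt_succ_iff.1 (mem_range.1 hi)))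
    _ = (r + 1) * Fintype.card α ^ r := by simp

theorem succ_mul_pow_lt_two_mul_pow_succ {n : ℕ} (hn : 0 < n) (r : ℕ) :
    (r + 1) * n ^ r < (2 * n) ^ (r + 1) := calc
  (r + 1) * n ^ r < 2 ^ (r + 1) * n ^ r := by gcongr; exact Nat.lt_two_pow_self
  _ ≤ 2 ^ (r + 1) * n ^ (r + 1) := by gcongr; omega
  _ = (2 * n) ^ (r + 1) := (mul_pow _ _ _).symm

theorem two_rpow_le_exp {x : ℝ} (hx : 0 ≤ x) : (2 : ℝ) ^ x ≤ exp x := by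
  rw [rpow_def_of_pos two_pos]
  gcongr
  exact mul_le_of_le_one_left hx (log_two_lt_d9.le.trans (by norm_num))

theorem card_finsets_card_le_lt_exp {B t' : ℕ} (hB : 0 < B) {x : ℝ}
    (hx : 5 * B * ((t' : ℝ) + logb 2 B + 1) ≤ x) :
    (#{S : Finset (Fin (B * 2 ^ t')) | #S ≤ 4 * B} : ℝ) < exp x := by
  set N := B * 2 ^ t'
  have hN : 0 < N := by positivity
  have : NeZero N := ⟨hN.ne'⟩
  have hcount : #{S : Finset (Fin N) | #S ≤ 4 * B} < (2 * N) ^ (5 * B) := calc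
    _ ≤ (4 * B + 1) * N ^ (4 * B) := by simpa using card_filter_card_le_le (α := Fin N) (4 * B)
    _ < (2 * N) ^ (4 * B + 1) := succ_mul_pow_lt_two_mul_pow_succ hN _
    _ ≤ (2 * N) ^ (5 * B) := Nat.pow_le_pow_right (by omega) (by omega)
  have hlog : 0 ≤ logb 2 B := logb_nonneg one_lt_two (by exact_mod_cast hB)
  have h2N : (2 : ℝ) ^ ((t' : ℝ) + logb 2 B + 1) = 2 * N := by
    rw [rpow_add two_pos, rpow_add two_pos, rpow_natCast, rpow_logb two_pos (by norm_num)
      (by positivity), rpow_one]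
    push_cast [N]
    ring
  calc (#{S : Finset (Fin N) | #S ≤ 4 * B} : ℝ) < (2 * N : ℝ) ^ (5 * B) := by
        exact_mod_cast hcount
    _ = 2 ^ (5 * B * ((t' : ℝ) + logb 2 B + 1)) := by
        rw [← h2N, mul_comm, ← rpow_mul_natCast zero_le_two]; push_cast; ring_nf
    _ ≤ 2 ^ x := rpow_le_rpow_of_exponent_le one_le_two hx
    _ ≤ exp x := two_rpow_le_exp (le_trans (by positivity) hx)

theorem two_rpow_neg_mul_card_le_card_injOn {B t N : ℕ} (hB : 0 < B) (ht : 3 ≤ t)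
    {S : Finset (Fin N)} (hS : #S ≤ 4 * B) :
    (2 : ℝ) ^ (-(32 * B / 2 ^ t : ℝ)) * Nat.card (Fin N → Fin (B * 2 ^ t)) ≤
      Nat.card {f : Fin N → Fin (B * 2 ^ t) // Set.InjOn f S} := by
  have h8 : 8 ≤ 2 ^ t := by
    calc 8 = 2 ^ 3 := rfl
      _ ≤ 2 ^ t := Nat.pow_le_pow_right two_pos ht
  have hM : 2 * Nat.card (S : Set (Fin N)) ≤ Nat.card (Fin (B * 2 ^ t)) := by
    simp only [Nat.card_coe_set_eq, Set.ncard_coe_finset, Nat.card_fin]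
    nlinarith
  refine le_trans ?_ (Set.two_rpow_mul_pow_le_natCard_injOn hM)
  simp only [Nat.card_fun, Nat.card_coe_set_eq, Set.ncard_coe_finset, Nat.card_fin]
  push_cast
  refine mul_le_mul_of_nonneg_right (rpow_le_rpow_of_exponent_le one_le_two ?_) (by positivity)
  rw [neg_le_neg_iff, div_le_div_iff₀ (by positivity) (by positivity)]
  have hS2 : (#S : ℝ) ^ 2 ≤ (4 * B) ^ 2 := by gcongr; exact_mod_cast hS
  nlinarith [pow_pos (two_pos : (0 : ℝ) < 2) t]

/-- **Claim 2.6, existential part.**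
There is an absolute constant `c₀ > 0` such that for all positive integers `B, t, t'` with
`t' ≥ t ≥ 20` and `2^{B/2^t} ≥ c₀·B·(t' + log₂ B + 1)`, there exists a family `H` of
functions from a set of size `B·2^{t'}` to a set of size `B·2^t` with
`|H| ≤ 2^{⌈33·B/2^t⌉}`, such that for every subset `S` of the domain with `|S| ≤ 4B`
there exists `h ∈ H` that is injective on `S`. -/
theorem universe_reduction_family_exists :
    ∃ c₀ : ℝ, 0 < c₀ ∧
      ∀ B t t' : ℕ, 0 < B → 20 ≤ t → t ≤ t' →
        c₀ * B * ((t' : ℝ) + Real.logb 2 B + 1) ≤ (2 : ℝ) ^ ((B : ℝ) / 2 ^ t) →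
        ∃ H : Finset (Fin (B * 2 ^ t') → Fin (B * 2 ^ t)),
          H.card ≤ 2 ^ (⌈(33 * B : ℝ) / 2 ^ t⌉₊) ∧
          ∀ S : Finset (Fin (B * 2 ^ t')), S.card ≤ 4 * B →
            ∃ h ∈ H, Set.InjOn h ↑S := by
  refine ⟨5, by norm_num, fun B t t' hB ht _ hc₀ => ?_⟩
  set p : ℝ := 2 ^ (-(32 * B / 2 ^ t : ℝ))
  set k := 2 ^ ⌈(33 * B : ℝ) / 2 ^ t⌉₊
  have hpk : (2 : ℝ) ^ ((B : ℝ) / 2 ^ t) ≤ p * k := calc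
    (2 : ℝ) ^ ((B : ℝ) / 2 ^ t) ≤ 2 ^ (-(32 * B / 2 ^ t : ℝ) + ⌈(33 * B : ℝ) / 2 ^ t⌉₊) :=
      rpow_le_rpow_of_exponent_le one_le_two <| by
        have : (33 * B : ℝ) / 2 ^ t = B / 2 ^ t + 32 * B / 2 ^ t := by ring
        linarith [Nat.le_ceil ((33 * B : ℝ) / 2 ^ t)]
    _ = p * k := by rw [rpow_add two_pos, rpow_natCast]; simp [p, k]
  have : NeZero (B * 2 ^ t) := ⟨by positivity⟩
  obtain ⟨H, hHk, hH⟩ := exists_finset_card_le_forall_exists_of_card_lt_exp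
    {S : Finset (Fin (B * 2 ^ t')) | #S ≤ 4 * B}
    (fun S (f : Fin (B * 2 ^ t') → Fin (B * 2 ^ t)) => Set.InjOn f S) p k
    (fun S hS => two_rpow_neg_mul_card_le_card_injOn hB (by omega) (by simpa using hS))
    (card_finsets_card_le_lt_exp hB (hc₀.trans hpk))
  exact ⟨H, hHk, fun S hS => hH S (by simpa using hS)⟩
end

section
/- (Claim 4.9.) Fix a realization (A, R_A, R_{B₀}) in the support of the process and an index i ∈ {1, …, n/2}. Conditioned on (A, R_A, R_{B₀}), the expected number of triples (x, r_x, r_i) ∈ P_i(F(A, R_A, R_{B₀})) that do not remain feasible after the random choice of B is at most n + 1. Moreover, the same bound n + 1 holds when one additionally conditions on b_i = β for any fixed β ∈ U_i \ {a_i}. -/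
noncomputable section

namespace DynRetrieval

/-! ### Entropy on a finite sample space with the uniform distribution -/

/-- The probability of an event `s` under the uniform distribution on a finite type `Ω`. -/
def unifPr (Ω : Type*) [Fintype Ω] (s : Set Ω) : ℝ :=
  (Nat.card s : ℝ) / (Fintype.card Ω : ℝ)

/-- The Shannon entropy (in bits) of a random variable `X` defined on a finite sample
space `Ω` carrying the uniform distribution. -/
def entropy {Ω : Type*} {α : Type*} [Fintype Ω] (X : Ω → α) : ℝ :=
  (∑ ω : Ω, -Real.logb 2 (unifPr Ω {ω' | X ω' = X ω})) / (Fintype.card Ω : ℝ)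

/-- The conditional Shannon entropy `H(X | Y) = H(X, Y) − H(Y)` (in bits). -/
def condEntropy {Ω : Type*} {α β : Type*} [Fintype Ω] (X : Ω → α) (Y : Ω → β) : ℝ :=
  entropy (fun ω => (X ω, Y ω)) - entropy Y

/-- The first bit of a `v`-bit string. -/
def firstBit {v : ℕ} (r : Fin v → Bool) : Bool :=
  if h : 0 < v then r ⟨0, h⟩ else false

/-! ### The dynamic random process

Parameters `n v u`, with `n` even, `u ≥ n³`, and `u − n/2` divisible by `n/2`.
The set `[u] \ [n/2]` is split into `n/2` consecutive parts, each of size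
`2u/n − 1 = (u − n/2)/(n/2)`.  An element of the `i`-th part is identified by its
position `a` inside the part; as a (0-indexed) natural number it is the key
`n/2 + i·((u − n/2)/(n/2)) + a`.  The keys `0, …, n/2 − 1` form the set `B₀`. -/

variable (n v u : ℕ)

/-- The number of parts, `n/2`. -/
def K : ℕ := n / 2

/-- The size of each part, `(u − n/2)/(n/2) = 2u/n − 1`. -/
def W : ℕ := (u - n / 2) / (n / 2)

/-- The key (element of `[u] \ [n/2]`, 0-indexed) at position `a` of part `i`. -/
def key (i : Fin (K n)) (a : Fin (W n u)) : ℕ := n / 2 + (i : ℕ) * W n u + (a : ℕ)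

/-- The model hypotheses on the parameters: `n` even with `n ≥ 4`, `v ≥ 1`, `u ≥ n³`,
and `u − n/2` divisible by `n/2`. -/
def Hyp : Prop :=
  n % 2 = 0 ∧ 4 ≤ n ∧ 1 ≤ v ∧ n ^ 3 ≤ u ∧ n / 2 ∣ (u - n / 2)

/-- Raw data of a realization of the first stage of the process: `(A, R_A, R_{B₀})`.
`A i` is (the position of) the element of `A` in part `i`, `R_A i` its `v`-bit value, and
`R_{B₀} i` the `v`-bit value of the key `i ∈ B₀ = {0, …, n/2 − 1}`. -/
abbrev FData : Type :=
  (Fin (K n) → Fin (W n u)) × (Fin (K n) → Fin v → Bool) × (Fin (K n) → Fin v → Bool)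

/-- Validity of a realization `(A, R_A, R_{B₀})`: every value of `R_A` has first bit `1`
(`A` and `R_{B₀}` are unconstrained). -/
def ValidF (d : FData n v u) : Prop := ∀ j, firstBit (d.2.1 j) = true

/-- Raw data of a full realization of the dynamic random process:
`((A, R_A, R_{B₀}), (B, R_B))`. -/
abbrev DynData : Type :=
  FData n v u × ((Fin (K n) → Fin (W n u)) × (Fin (K n) → Fin v → Bool))

/-- Validity of a full realization: `R_A` has first bits `1`, `B` avoids `A` in each
part, and `R_B` has first bits `0`. -/
def DynValid (d : DynData n v u) : Prop :=
  ValidF n v u d.1 ∧ (∀ j, d.2.1 j ≠ d.1.1 j) ∧ ∀ j, firstBit (d.2.2 j) = false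

/-- The sample space of the dynamic random process: since every random choice in the
process is uniform (subject to the stated constraints, whose number of options does not
depend on the previous choices), the joint distribution of `(A, R_A, R_{B₀}, B, R_B)` is
the uniform distribution on the set of valid realizations. -/
abbrev DynOmega : Type := {d : DynData n v u // DynValid n v u d}

noncomputable instance : Fintype (DynOmega n v u) := Fintype.ofFinite _

/-- The type of the (deterministic) map `F`, building a bit string from a realization of
`(A, R_A, R_{B₀})`. -/
abbrev FBuilder : Type :=
  (Fin (K n) → Fin (W n u)) → (Fin (K n) → Fin v → Bool) →
    (Fin (K n) → Fin v → Bool) → List Bool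

/-- The type of the (deterministic) map `G`, building a bit string from a bit string
together with a realization of `(B, R_B)`. -/
abbrev GBuilder : Type :=
  List Bool → (Fin (K n) → Fin (W n u)) → (Fin (K n) → Fin v → Bool) → List Bool

/-- The type of the (deterministic) query map: a bit string and a key give a `v`-bit
value. -/
abbrev QueryFn (v : ℕ) : Type := List Bool → ℕ → Fin v → Bool

/-- The random bit string `F = F(A, R_A, R_{B₀})`. -/
def Frv (F : FBuilder n v u) (ω : DynOmega n v u) : List Bool :=
  F ω.1.1.1 ω.1.1.2.1 ω.1.1.2.2

/-- The random bit string `G = G(F(A, R_A, R_{B₀}), B, R_B)`. -/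
def Grv (F : FBuilder n v u) (G : GBuilder n v u) (ω : DynOmega n v u) : List Bool :=
  G (Frv n v u F ω) ω.1.2.1 ω.1.2.2

/-- The random variable `B`. -/
def Brv (ω : DynOmega n v u) : Fin (K n) → Fin (W n u) := ω.1.2.1

/-- Correctness of a dynamic retrieval scheme `(F, G, Query)`: on every realization in
the support of the process, querying `F(A, R_A, R_{B₀})` with a key of `A ∪ B₀` returns
its value, and querying `G(F(A, R_A, R_{B₀}), B, R_B)` with a key of `A ∪ B` returns its
value. -/
def Correct (F : FBuilder n v u) (G : GBuilder n v u) (Q : QueryFn v) : Prop :=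
  ∀ ω : DynOmega n v u,
    (∀ i, Q (Frv n v u F ω) (key n u i (ω.1.1.1 i)) = ω.1.1.2.1 i) ∧
    (∀ i : Fin (K n), Q (Frv n v u F ω) (i : ℕ) = ω.1.1.2.2 i) ∧
    (∀ i, Q (Grv n v u F G ω) (key n u i (ω.1.1.1 i)) = ω.1.1.2.1 i) ∧
    (∀ i, Q (Grv n v u F G ω) (key n u i (ω.1.2.1 i)) = ω.1.2.2 i)

/-- The plausible set `P_i(f)`: all triples `(x, r_x, r_i)` of an element `x` of part
`i`, a `v`-bit value `r_x` with first bit `1`, and a `v`-bit value `r_i`, such that some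
realization `(A', R'_{A'}, R'_{B₀})` in the support of `(A, R_A, R_{B₀})` has
`F(A', R'_{A'}, R'_{B₀}) = f`, `x` the element of `A'` in part `i` with value `r_x`, and
`r_i` the value of the key `i ∈ B₀` in `R'_{B₀}`. -/
def Plausible (F : FBuilder n v u) (f : List Bool) (i : Fin (K n)) :
    Set (Fin (W n u) × (Fin v → Bool) × (Fin v → Bool)) :=
  {p | ∃ d : FData n v u, ValidF n v u d ∧ F d.1 d.2.1 d.2.2 = f ∧
        d.1 i = p.1 ∧ d.2.1 i = p.2.1 ∧ d.2.2 i = p.2.2}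

/-- A triple `(x, r_x, r_i) ∈ P_i(f)` *remains feasible after `B`* if the witness
`(A', R'_{A'}, R'_{B₀})` can additionally be chosen with `A' ∩ B = ∅`. -/
def Feasible (F : FBuilder n v u) (f : List Bool) (i : Fin (K n))
    (B : Fin (K n) → Fin (W n u)) (p : Fin (W n u) × (Fin v → Bool) × (Fin v → Bool)) :
    Prop :=
  ∃ d : FData n v u, ValidF n v u d ∧ F d.1 d.2.1 d.2.2 = f ∧
    d.1 i = p.1 ∧ d.2.1 i = p.2.1 ∧ d.2.2 i = p.2.2 ∧ ∀ j, B j ≠ d.1 j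

end DynRetrieval

namespace DynRetrieval


open Finset
open scoped Classical

private lemma card_filter_pi_le {K W : ℕ} (T : Fin K → Finset (Fin W)) (j₀ : Fin K) (c : Fin W) :
    ((Fintype.piFinset T).filter (fun B => B j₀ = c)).card ≤
      ∏ j ∈ Finset.univ.erase j₀, (T j).card := by
  classical
  have hsub : (Fintype.piFinset T).filter (fun B => B j₀ = c) ⊆
      Fintype.piFinset (fun j => if j = j₀ then ({c} ∩ T j₀) else T j) := by
    intro B hB
    simp only [Finset.mem_filter, Fintype.mem_piFinset] at hB ⊢
    intro j
    by_cases h : j = j₀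
    · subst h
      rw [if_pos rfl]
      exact Finset.mem_inter.mpr ⟨Finset.mem_singleton.mpr hB.2, hB.1 j⟩
    · simpa [h] using hB.1 j
  calc ((Fintype.piFinset T).filter (fun B => B j₀ = c)).card
      ≤ (Fintype.piFinset (fun j => if j = j₀ then ({c} ∩ T j₀) else T j)).card :=
        Finset.card_le_card hsub
    _ = ∏ j, ((if j = j₀ then ({c} ∩ T j₀) else T j)).card := Fintype.card_piFinset _
    _ = ({c} ∩ T j₀).card * ∏ j ∈ Finset.univ.erase j₀,
          ((if j = j₀ then ({c} ∩ T j₀) else T j)).card := by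
        rw [← Finset.mul_prod_erase Finset.univ _ (Finset.mem_univ j₀), if_pos rfl]
    _ ≤ 1 * ∏ j ∈ Finset.univ.erase j₀, (T j).card := by
        apply Nat.mul_le_mul
        · exact (Finset.card_le_card Finset.inter_subset_left).trans (by simp)
        · apply le_of_eq
          exact Finset.prod_congr rfl fun j hj => by rw [if_neg (Finset.ne_of_mem_erase hj)]
    _ = ∏ j ∈ Finset.univ.erase j₀, (T j).card := one_mul _

private lemma prod_le_pow {K W : ℕ} (s : Finset (Fin K)) (T : Fin K → Finset (Fin W)) (m : ℕ)
    (hT : ∀ j, (T j).card ≤ m) : ∏ j ∈ s, (T j).card ≤ m ^ s.card := by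
  calc ∏ j ∈ s, (T j).card ≤ ∏ _j ∈ s, m := Finset.prod_le_prod' (fun j _ => hT j)
    _ = m ^ s.card := Finset.prod_const m

private lemma prod_le_pow_of_one_mem {K W : ℕ} (s : Finset (Fin K)) (T : Fin K → Finset (Fin W))
    (i : Fin K) (hi : i ∈ s) (m : ℕ) (hTi : (T i).card ≤ 1) (hT : ∀ j, (T j).card ≤ m) :
    ∏ j ∈ s, (T j).card ≤ m ^ (s.card - 1) := by
  rw [← Finset.mul_prod_erase s _ hi]
  calc (T i).card * ∏ j ∈ s.erase i, (T j).card
      ≤ 1 * m ^ (s.erase i).card :=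
        Nat.mul_le_mul hTi (prod_le_pow _ _ _ hT)
    _ = m ^ (s.card - 1) := by rw [one_mul, Finset.card_erase_of_mem hi]

private lemma prod_card_eq {K W : ℕ} (i : Fin K) (T : Fin K → Finset (Fin W))
    (hTi : (T i).card = 1) (m : ℕ) (hT : ∀ j, j ≠ i → (T j).card = m) :
    ∏ j, (T j).card = m ^ (K - 1) := by
  rw [← Finset.mul_prod_erase Finset.univ _ (Finset.mem_univ i), hTi, one_mul]
  rw [Finset.prod_congr rfl (fun j hj => hT j (Finset.ne_of_mem_erase hj)),
    Finset.prod_const, Finset.card_erase_of_mem (Finset.mem_univ i), Finset.card_univ,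
    Fintype.card_fin]


/-- **Claim 4.9.** Fix a realization `(A, R_A, R_{B₀})` in the support of the process and
an index `i ∈ {1, …, n/2}`.  Conditioned on `(A, R_A, R_{B₀})`, the expected number of
triples `(x, r_x, r_i) ∈ P_i(F(A, R_A, R_{B₀}))` that do *not* remain feasible after the
random choice of `B` is at most `n + 1`.  Moreover, the same bound `n + 1` holds when one
additionally conditions on `b_i = β` for any fixed `β ∈ U_i \ {a_i}`.

(Conditioned on `(A, R_A, R_{B₀})`, the variable `B` is uniform over its valid
realizations, so each conditional expectation is the corresponding average of counts.) -/
theorem dynamic_expected_infeasible_triples :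
    ∀ n v u : ℕ, Hyp n v u →
    ∀ (F : FBuilder n v u) (G : GBuilder n v u) (Q : QueryFn v),
      Correct n v u F G Q →
    ∀ d : FData n v u, ValidF n v u d →
    ∀ i : Fin (K n),
      ((∑ B : Fin (K n) → Fin (W n u),
          Set.indicator {B | ∀ j, B j ≠ d.1 j}
            (fun B => (Nat.card {p : Fin (W n u) × (Fin v → Bool) × (Fin v → Bool) |
                p ∈ Plausible n v u F (F d.1 d.2.1 d.2.2) i ∧
                  ¬ Feasible n v u F (F d.1 d.2.1 d.2.2) i B p} : ℝ)) B) /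
          (Nat.card {B : Fin (K n) → Fin (W n u) // ∀ j, B j ≠ d.1 j} : ℝ) ≤
            (n : ℝ) + 1) ∧
      ∀ β : Fin (W n u), β ≠ d.1 i →
        (∑ B : Fin (K n) → Fin (W n u),
            Set.indicator {B | (∀ j, B j ≠ d.1 j) ∧ B i = β}
              (fun B => (Nat.card {p : Fin (W n u) × (Fin v → Bool) × (Fin v → Bool) |
                  p ∈ Plausible n v u F (F d.1 d.2.1 d.2.2) i ∧
                    ¬ Feasible n v u F (F d.1 d.2.1 d.2.2) i B p} : ℝ)) B) /
          (Nat.card {B : Fin (K n) → Fin (W n u) //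
              (∀ j, B j ≠ d.1 j) ∧ B i = β} : ℝ) ≤ (n : ℝ) + 1 := by
  intro n v u hyp F G Q hQ d hd i
  classical
  obtain ⟨hn2, hn4, hv, hu, -⟩ := hyp
  have hKn : K n = n / 2 := rfl
  have hK2 : 2 ≤ K n := by omega
  have hW2 : 2 ≤ W n u := by
    have h3 : n * n * n ≤ u := by
      calc n * n * n = n ^ 3 := by ring
        _ ≤ u := hu
    have h2 : 2 * n ≤ n * n * n := by nlinarith
    have h4 : 2 * n ≤ u := le_trans h2 h3
    show 2 ≤ (u - n / 2) / (n / 2)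
    rw [Nat.le_div_iff_mul_le (by omega : 0 < n / 2)]
    omega
  set m := W n u - 1 with hm
  have hm1 : 1 ≤ m := by omega
  have hWm : W n u = m + 1 := by omega
  have hnK : n = 2 * K n := by omega
  obtain ⟨L, hKL⟩ : ∃ L, K n = L + 2 := ⟨K n - 2, by omega⟩
  have hnL : n = 2 * L + 4 := by omega
  set f := F d.1 d.2.1 d.2.2 with hfdef
  -- extension of a valid first-stage realization to a full realization
  have hext : ∀ d' : FData n v u, ValidF n v u d' → ∃ ω : DynOmega n v u, ω.1.1 = d' := by
    intro d' hd'
    haveI : Nontrivial (Fin (W n u)) := Fin.nontrivial_iff_two_le.mpr hW2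
    have hW' : ∀ j : Fin (K n), ∃ y : Fin (W n u), y ≠ d'.1 j := fun j => exists_ne _
    choose Bf hBf using hW'
    refine ⟨⟨⟨d', Bf, fun _ _ => false⟩, hd', hBf, fun j => ?_⟩, rfl⟩
    unfold firstBit
    split <;> rfl
  -- the values of a plausible triple are determined by its position
  have hdet : ∀ p ∈ Plausible n v u F f i,
      p.2.1 = Q f (key n u i p.1) ∧ p.2.2 = Q f (i : ℕ) := by
    intro p hp
    obtain ⟨d', hval, hFd', h1, h2, h3⟩ := hp
    obtain ⟨ω, hω⟩ := hext d' hval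
    have hfr : Frv n v u F ω = f := by rw [Frv, hω]; exact hFd'
    obtain ⟨c1, c2, -, -⟩ := hQ ω
    constructor
    · have hc := c1 i
      rw [hfr, hω] at hc
      rw [← h2, ← h1]
      exact hc.symm
    · have hc := c2 i
      rw [hfr, hω] at hc
      rw [← h3]
      exact hc.symm
  have huniq : ∀ p ∈ Plausible n v u F f i, ∀ q ∈ Plausible n v u F f i, p.1 = q.1 → p = q := by
    intro p hp q hq h1
    obtain ⟨hp1, hp2⟩ := hdet p hp
    obtain ⟨hq1, hq2⟩ := hdet q hq
    have h2 : p.2 = q.2 := by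
      have e1 : p.2.1 = q.2.1 := by rw [hp1, hq1, h1]
      have e2 : p.2.2 = q.2.2 := by rw [hp2, hq2]
      exact Prod.ext e1 e2
    exact Prod.ext h1 h2
  -- a choice of witness configuration for each position
  have witdef : ∀ x : Fin (W n u), ∃ w : Fin (K n) → Fin (W n u),
      (w i = x ∨ w i = d.1 i) ∧
      ∀ p ∈ Plausible n v u F f i, p.1 = x → ∀ B : Fin (K n) → Fin (W n u),
        ¬ Feasible n v u F f i B p → ∃ j, B j = w j := by
    intro x
    by_cases h : ∃ d' : FData n v u, ValidF n v u d' ∧ F d'.1 d'.2.1 d'.2.2 = f ∧ d'.1 i = x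
    · obtain ⟨d', hval, hFe, hxi⟩ := h
      refine ⟨d'.1, Or.inl hxi, ?_⟩
      intro p hp hpx B hnf
      have hd'p : (d'.1 i, d'.2.1 i, d'.2.2 i) ∈ Plausible n v u F f i :=
        ⟨d', hval, hFe, rfl, rfl, rfl⟩
      have heq : p = (d'.1 i, d'.2.1 i, d'.2.2 i) :=
        huniq p hp _ hd'p (by rw [hpx, hxi])
      by_contra hno
      push_neg at hno
      exact hnf ⟨d', hval, hFe, hxi.trans hpx.symm, by rw [heq], by rw [heq],
        fun j => (hno j)⟩
    · refine ⟨d.1, Or.inr rfl, ?_⟩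
      intro p hp hpx B hnf
      exact absurd (by obtain ⟨d', h1, h2, h3, -, -⟩ := hp; exact ⟨d', h1, h2, h3.trans hpx⟩) h
  choose wit hwit1 hwit2 using witdef
  -- per-B bound on the number of infeasible plausible triples
  have hcnt : ∀ B : Fin (K n) → Fin (W n u),
      Nat.card {p : Fin (W n u) × (Fin v → Bool) × (Fin v → Bool) |
        p ∈ Plausible n v u F f i ∧ ¬ Feasible n v u F f i B p} ≤
      (Finset.univ.filter fun x : Fin (W n u) => ∃ j, B j = wit x j).card := by
    intro B
    rw [← Nat.card_eq_finsetCard]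
    refine Nat.card_le_card_of_injective
      (fun p => ⟨p.1.1, Finset.mem_filter.mpr
        ⟨Finset.mem_univ _, hwit2 p.1.1 p.1 p.2.1 rfl B p.2.2⟩⟩) ?_
    intro p q hpq
    apply Subtype.ext
    exact huniq p.1 p.2.1 q.1 q.2.1 (congrArg Subtype.val hpq)
  -- indicator sums are sums over the corresponding filter
  have hsum_ind : ∀ (P : (Fin (K n) → Fin (W n u)) → Prop) (g : (Fin (K n) → Fin (W n u)) → ℝ),
      (∑ B : Fin (K n) → Fin (W n u), Set.indicator {B | P B} g B)
        = ∑ B ∈ Finset.univ.filter P, g B := by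
    intro P g
    rw [Finset.sum_filter]
    refine Finset.sum_congr rfl fun B _ => ?_
    by_cases h : P B
    · rw [Set.indicator_of_mem (show B ∈ {B | P B} from h), if_pos h]
    · rw [Set.indicator_of_notMem (show B ∉ {B | P B} from h), if_neg h]
  -- swapping the sums
  have hswap : ∀ V : Finset (Fin (K n) → Fin (W n u)),
      (∑ B ∈ V, (Finset.univ.filter fun x : Fin (W n u) => ∃ j, B j = wit x j).card)
        = ∑ x : Fin (W n u), (V.filter fun B => ∃ j, B j = wit x j).card := by
    intro V
    simp_rw [Finset.card_filter]
    exact Finset.sum_comm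
  have hsplit : ∀ (V : Finset (Fin (K n) → Fin (W n u))) (x : Fin (W n u)),
      (V.filter fun B => ∃ j, B j = wit x j).card
        ≤ ∑ j : Fin (K n), (V.filter fun B => B j = wit x j).card := by
    intro V x
    refine le_trans (Finset.card_le_card ?_) Finset.card_biUnion_le
    intro B hB
    rw [Finset.mem_filter] at hB
    obtain ⟨hB1, j, hj⟩ := hB
    exact Finset.mem_biUnion.mpr ⟨j, Finset.mem_univ j, Finset.mem_filter.mpr ⟨hB1, hj⟩⟩
  -- the finset of valid B's
  set TV : Fin (K n) → Finset (Fin (W n u)) := fun j => Finset.univ.erase (d.1 j) with hTV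
  have hTVcard : ∀ j, (TV j).card = m := by
    intro j
    rw [hTV]
    rw [Finset.card_erase_of_mem (Finset.mem_univ _), Finset.card_univ, Fintype.card_fin]
  have hTVle : ∀ j, (TV j).card ≤ m := fun j => le_of_eq (hTVcard j)
  have hden1 : Nat.card {B : Fin (K n) → Fin (W n u) // ∀ j, B j ≠ d.1 j} = m ^ K n := by
    have e : Nat.card {B : Fin (K n) → Fin (W n u) // ∀ j, B j ≠ d.1 j}
        = Nat.card {B : Fin (K n) → Fin (W n u) // B ∈ Fintype.piFinset TV} :=
      Nat.card_congr (Equiv.subtypeEquivRight (fun B => by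
        simp [Fintype.mem_piFinset, hTV]))
    rw [e, Nat.card_eq_finsetCard, Fintype.card_piFinset]
    simp only [hTVcard]
    rw [Finset.prod_const, Finset.card_univ, Fintype.card_fin]
  have hbound1 : ∀ x : Fin (W n u),
      ((Fintype.piFinset TV).filter fun B => ∃ j, B j = wit x j).card
        ≤ K n * m ^ (K n - 1) := by
    intro x
    refine le_trans (hsplit _ x) ?_
    calc ∑ j : Fin (K n), ((Fintype.piFinset TV).filter fun B => B j = wit x j).card
        ≤ ∑ _j : Fin (K n), m ^ (K n - 1) := by
          refine Finset.sum_le_sum fun j _ => ?_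
          refine le_trans (card_filter_pi_le TV j (wit x j)) ?_
          refine le_trans (prod_le_pow _ TV m hTVle) ?_
          rw [Finset.card_erase_of_mem (Finset.mem_univ j), Finset.card_univ, Fintype.card_fin]
      _ = K n * m ^ (K n - 1) := by
          rw [Finset.sum_const, Finset.card_univ, Fintype.card_fin, smul_eq_mul]
  have hnumN1 : (∑ B ∈ Fintype.piFinset TV,
      (Finset.univ.filter fun x : Fin (W n u) => ∃ j, B j = wit x j).card)
        ≤ W n u * (K n * m ^ (K n - 1)) := by
    rw [hswap]
    calc ∑ x : Fin (W n u), ((Fintype.piFinset TV).filter fun B => ∃ j, B j = wit x j).card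
        ≤ ∑ _x : Fin (W n u), K n * m ^ (K n - 1) := Finset.sum_le_sum fun x _ => hbound1 x
      _ = W n u * (K n * m ^ (K n - 1)) := by
          rw [Finset.sum_const, Finset.card_univ, Fintype.card_fin, smul_eq_mul]
  have hnat1 : W n u * (K n * m ^ (K n - 1)) ≤ (n + 1) * m ^ K n := by
    have hps : m ^ K n = m * m ^ (K n - 1) := by
      rw [← pow_succ']
      congr 1
      exact (Nat.sub_add_cancel (le_trans one_le_two hK2)).symm
    rw [hps]
    have hcore : W n u * K n ≤ (n + 1) * m := by
      rw [hWm, hKL, hnL]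
      nlinarith [Nat.mul_le_mul_left L hm1]
    calc W n u * (K n * m ^ (K n - 1)) = (W n u * K n) * m ^ (K n - 1) := by ring
      _ ≤ ((n + 1) * m) * m ^ (K n - 1) := Nat.mul_le_mul_right _ hcore
      _ = (n + 1) * (m * m ^ (K n - 1)) := by ring
  constructor
  · -- unconditional bound
    have hdp : (0 : ℝ) < ((m ^ K n : ℕ) : ℝ) := by
      exact_mod_cast pow_pos hm1 (K n)
    rw [hden1, div_le_iff₀ hdp]
    calc (∑ B : Fin (K n) → Fin (W n u), Set.indicator {B | ∀ j, B j ≠ d.1 j}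
          (fun B => (Nat.card {p : Fin (W n u) × (Fin v → Bool) × (Fin v → Bool) |
            p ∈ Plausible n v u F f i ∧ ¬ Feasible n v u F f i B p} : ℝ)) B)
        = ∑ B ∈ Fintype.piFinset TV,
            (Nat.card {p : Fin (W n u) × (Fin v → Bool) × (Fin v → Bool) |
              p ∈ Plausible n v u F f i ∧ ¬ Feasible n v u F f i B p} : ℝ) := by
          rw [hsum_ind]
          refine Finset.sum_congr ?_ fun _ _ => rfl
          ext B
          simp [Fintype.mem_piFinset, hTV]
      _ ≤ ∑ B ∈ Fintype.piFinset TV,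
            ((Finset.univ.filter fun x : Fin (W n u) => ∃ j, B j = wit x j).card : ℝ) :=
          Finset.sum_le_sum fun B _ => by exact_mod_cast hcnt B
      _ = ((∑ B ∈ Fintype.piFinset TV,
            (Finset.univ.filter fun x : Fin (W n u) => ∃ j, B j = wit x j).card : ℕ) : ℝ) := by
          push_cast; rfl
      _ ≤ (((n + 1) * m ^ K n : ℕ) : ℝ) := by
          exact_mod_cast le_trans hnumN1 hnat1
      _ = ((n : ℝ) + 1) * ((m ^ K n : ℕ) : ℝ) := by push_cast; ring
  · -- conditional bound
    intro β hβ
    set TC : Fin (K n) → Finset (Fin (W n u)) := fun j =>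
      if j = i then {β} else Finset.univ.erase (d.1 j) with hTC
    have hTCi : (TC i).card = 1 := by rw [hTC]; simp
    have hTCother : ∀ j, j ≠ i → (TC j).card = m := by
      intro j hj
      rw [hTC]
      simp only [if_neg hj]
      rw [Finset.card_erase_of_mem (Finset.mem_univ _), Finset.card_univ, Fintype.card_fin]
    have hTCle : ∀ j, (TC j).card ≤ m := by
      intro j
      by_cases hj : j = i
      · rw [hj, hTCi]; exact hm1
      · exact le_of_eq (hTCother j hj)
    have hCmem : ∀ B : Fin (K n) → Fin (W n u),
        B ∈ Fintype.piFinset TC ↔ ((∀ j, B j ≠ d.1 j) ∧ B i = β) := by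
      intro B
      rw [Fintype.mem_piFinset]
      constructor
      · intro h
        have hBi : B i = β := by
          have := h i
          rw [hTC] at this
          simpa using this
        refine ⟨fun j => ?_, hBi⟩
        by_cases hj : j = i
        · rw [hj, hBi]; exact hβ
        · have := h j
          rw [hTC] at this
          simp only [if_neg hj, Finset.mem_erase] at this
          exact this.1
      · rintro ⟨h1, h2⟩ j
        rw [hTC]
        by_cases hj : j = i
        · simp [hj, h2]
        · simp only [if_neg hj, Finset.mem_erase]
          exact ⟨h1 j, Finset.mem_univ _⟩
    have hcardC : (Fintype.piFinset TC).card = m ^ (K n - 1) := by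
      rw [Fintype.card_piFinset]
      exact prod_card_eq i TC hTCi m hTCother
    have hden2 : Nat.card {B : Fin (K n) → Fin (W n u) //
        (∀ j, B j ≠ d.1 j) ∧ B i = β} = m ^ (K n - 1) := by
      have e : Nat.card {B : Fin (K n) → Fin (W n u) // (∀ j, B j ≠ d.1 j) ∧ B i = β}
          = Nat.card {B : Fin (K n) → Fin (W n u) // B ∈ Fintype.piFinset TC} :=
        Nat.card_congr (Equiv.subtypeEquivRight (fun B => (hCmem B).symm))
      rw [e, Nat.card_eq_finsetCard, hcardC]
    -- per-position bounds over the conditioned set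
    have hempty : ∀ x : Fin (W n u), x ≠ β →
        (Fintype.piFinset TC).filter (fun B => B i = wit x i) = ∅ := by
      intro x hx
      rw [Finset.filter_eq_empty_iff]
      intro B hB
      have hBi : B i = β := ((hCmem B).mp hB).2
      rw [hBi]
      rcases hwit1 x with h | h
      · rw [h]; exact fun he => hx he.symm
      · rw [h]; exact hβ
    have hjbound : ∀ (x : Fin (W n u)) (j : Fin (K n)), j ≠ i →
        ((Fintype.piFinset TC).filter fun B => B j = wit x j).card ≤ m ^ (K n - 2) := by
      intro x j hj
      refine le_trans (card_filter_pi_le TC j (wit x j)) ?_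
      have hi : i ∈ Finset.univ.erase j := Finset.mem_erase.mpr ⟨fun h => hj h.symm, Finset.mem_univ _⟩
      refine le_trans (prod_le_pow_of_one_mem _ TC i hi m (le_of_eq hTCi) hTCle) ?_
      rw [Finset.card_erase_of_mem (Finset.mem_univ j), Finset.card_univ, Fintype.card_fin]
      exact le_rfl
    have hxbound : ∀ x : Fin (W n u), x ≠ β →
        ((Fintype.piFinset TC).filter fun B => ∃ j, B j = wit x j).card
          ≤ (K n - 1) * m ^ (K n - 2) := by
      intro x hx
      refine le_trans (hsplit _ x) ?_
      rw [← Finset.add_sum_erase _ _ (Finset.mem_univ i), hempty x hx, Finset.card_empty,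
        zero_add]
      calc ∑ j ∈ Finset.univ.erase i,
            ((Fintype.piFinset TC).filter fun B => B j = wit x j).card
          ≤ ∑ _j ∈ Finset.univ.erase i, m ^ (K n - 2) :=
            Finset.sum_le_sum fun j hj => hjbound x j (Finset.ne_of_mem_erase hj)
        _ = (K n - 1) * m ^ (K n - 2) := by
            rw [Finset.sum_const, smul_eq_mul, Finset.card_erase_of_mem (Finset.mem_univ i),
              Finset.card_univ, Fintype.card_fin]
    have hnumN2 : (∑ B ∈ Fintype.piFinset TC,
        (Finset.univ.filter fun x : Fin (W n u) => ∃ j, B j = wit x j).card)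
          ≤ m ^ (K n - 1) + W n u * ((K n - 1) * m ^ (K n - 2)) := by
      rw [hswap]
      rw [← Finset.add_sum_erase _ _ (Finset.mem_univ β)]
      refine Nat.add_le_add ?_ ?_
      · calc ((Fintype.piFinset TC).filter fun B => ∃ j, B j = wit β j).card
            ≤ (Fintype.piFinset TC).card := Finset.card_le_card (Finset.filter_subset _ _)
          _ = m ^ (K n - 1) := hcardC
      · calc ∑ x ∈ Finset.univ.erase β,
              ((Fintype.piFinset TC).filter fun B => ∃ j, B j = wit x j).card
            ≤ ∑ _x ∈ Finset.univ.erase β, (K n - 1) * m ^ (K n - 2) :=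
              Finset.sum_le_sum fun x hx => hxbound x (Finset.ne_of_mem_erase hx)
          _ = (Finset.univ.erase β).card * ((K n - 1) * m ^ (K n - 2)) := by
              rw [Finset.sum_const, smul_eq_mul]
          _ ≤ W n u * ((K n - 1) * m ^ (K n - 2)) := by
              refine Nat.mul_le_mul_right _ ?_
              calc (Finset.univ.erase β).card ≤ Finset.univ.card :=
                    Finset.card_le_card (Finset.erase_subset _ _)
                _ = W n u := by rw [Finset.card_univ, Fintype.card_fin]
    have hnat2 : m ^ (K n - 1) + W n u * ((K n - 1) * m ^ (K n - 2))
        ≤ (n + 1) * m ^ (K n - 1) := by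
      have hps : m ^ (K n - 1) = m * m ^ (K n - 2) := by
        rw [← pow_succ']
        congr 1
        rw [hKL]
        simp
      rw [hps]
      have hcore : m + W n u * (K n - 1) ≤ (n + 1) * m := by
        rw [hWm, hKL, hnL]
        have h1 : (L + 2) - 1 = L + 1 := rfl
        rw [h1]
        nlinarith [Nat.mul_le_mul_left L hm1]
      calc m * m ^ (K n - 2) + W n u * ((K n - 1) * m ^ (K n - 2))
          = (m + W n u * (K n - 1)) * m ^ (K n - 2) := by ring
        _ ≤ ((n + 1) * m) * m ^ (K n - 2) := Nat.mul_le_mul_right _ hcore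
        _ = (n + 1) * (m * m ^ (K n - 2)) := by ring
    have hdp : (0 : ℝ) < ((m ^ (K n - 1) : ℕ) : ℝ) := by
      exact_mod_cast pow_pos hm1 (K n - 1)
    rw [hden2, div_le_iff₀ hdp]
    calc (∑ B : Fin (K n) → Fin (W n u),
          Set.indicator {B | (∀ j, B j ≠ d.1 j) ∧ B i = β}
          (fun B => (Nat.card {p : Fin (W n u) × (Fin v → Bool) × (Fin v → Bool) |
            p ∈ Plausible n v u F f i ∧ ¬ Feasible n v u F f i B p} : ℝ)) B)
        = ∑ B ∈ Fintype.piFinset TC,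
            (Nat.card {p : Fin (W n u) × (Fin v → Bool) × (Fin v → Bool) |
              p ∈ Plausible n v u F f i ∧ ¬ Feasible n v u F f i B p} : ℝ) := by
          rw [hsum_ind]
          refine Finset.sum_congr ?_ fun _ _ => rfl
          ext B
          simp only [Finset.mem_filter, Finset.mem_univ, true_and]
          exact (hCmem B).symm
      _ ≤ ∑ B ∈ Fintype.piFinset TC,
            ((Finset.univ.filter fun x : Fin (W n u) => ∃ j, B j = wit x j).card : ℝ) :=
          Finset.sum_le_sum fun B _ => by exact_mod_cast hcnt B
      _ = ((∑ B ∈ Fintype.piFinset TC,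
            (Finset.univ.filter fun x : Fin (W n u) => ∃ j, B j = wit x j).card : ℕ) : ℝ) := by
          push_cast; rfl
      _ ≤ (((n + 1) * m ^ (K n - 1) : ℕ) : ℝ) := by
          exact_mod_cast le_trans hnumN2 hnat2
      _ = ((n : ℝ) + 1) * ((m ^ (K n - 1) : ℕ) : ℝ) := by push_cast; ring


end DynRetrieval
end
end

section
/- (Claim 4.10.) Fix a realization (A, R_A, R_{B₀}, B, R_B) in the support of the process and an index i ∈ {1, …, n/2}. If a triple (x, r_x, r_i) ∈ P_i(F(A, R_A, R_{B₀})) remains feasible after B, then the first bit of Query(G(F(A, R_A, R_{B₀}), B, R_B), x) equals 1; that is, the data structure G must report that x belongs to A when queried with x. -/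
noncomputable section

namespace DynRetrieval

variable {n v u : ℕ}

theorem firstBit_query_Grv_key_A {F : FBuilder n v u} {G : GBuilder n v u} {Q : QueryFn v}
    (hCorr : Correct n v u F G Q) (ω : DynOmega n v u) (i : Fin (K n)) :
    firstBit (Q (Grv n v u F G ω) (key n u i (ω.1.1.1 i))) = true := by
  rw [(hCorr ω).2.2.1 i]
  exact ω.2.1 i

/-- The feasibility witness, completed by the second stage `(B, R_B)` of `ω`, is itself a
realization of the process. -/
theorem exists_Grv_eq_of_feasible {F : FBuilder n v u} (G : GBuilder n v u)
    {ω : DynOmega n v u} {i : Fin (K n)} {p : Fin (W n u) × (Fin v → Bool) × (Fin v → Bool)}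
    (hp : Feasible n v u F (Frv n v u F ω) i ω.1.2.1 p) :
    ∃ ω' : DynOmega n v u, Grv n v u F G ω' = Grv n v u F G ω ∧ ω'.1.1.1 i = p.1 := by
  obtain ⟨d, hd, hFd, hdi, -, -, hB⟩ := hp
  refine ⟨⟨(d, ω.1.2), hd, hB, ω.2.2.2⟩, ?_, hdi⟩
  simp only [Grv, Frv] at hFd ⊢
  rw [hFd]

/-- **Claim 4.10.** Fix a realization `(A, R_A, R_{B₀}, B, R_B)` in the support of the
process (an element `ω` of the sample space) and an index `i ∈ {1, …, n/2}`.  If a triple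
`(x, r_x, r_i) ∈ P_i(F(A, R_A, R_{B₀}))` remains feasible after `B`, then the first bit
of `Query(G(F(A, R_A, R_{B₀}), B, R_B), x)` equals `1`; that is, the data structure `G`
must report that `x` belongs to `A` when queried with `x`. -/
theorem dynamic_feasible_must_return_A :
    ∀ n v u : ℕ, Hyp n v u →
    ∀ (F : FBuilder n v u) (G : GBuilder n v u) (Q : QueryFn v),
      Correct n v u F G Q →
    ∀ (ω : DynOmega n v u) (i : Fin (K n))
      (p : Fin (W n u) × (Fin v → Bool) × (Fin v → Bool)),
      p ∈ Plausible n v u F (Frv n v u F ω) i →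
      Feasible n v u F (Frv n v u F ω) i ω.1.2.1 p →
      firstBit (Q (Grv n v u F G ω) (key n u i p.1)) = true := by
  intro n v u _ F G Q hCorr ω i p _ hFeas
  obtain ⟨ω', hG, hx⟩ := exists_Grv_eq_of_feasible G hFeas
  rw [← hG, ← hx]
  exact firstBit_query_Grv_key_A hCorr ω' i

end DynRetrieval
end
end
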